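/- arXiv:2006.13714 — 2 statements merged into one kernel-verified Lean document; each statement's English description precedes it below -/
import Mathlib

section
/- Let M, n be positive integers, let x_1, …, x_M ∈ ℝⁿ (the vectorized image patches), fix a reference index i, and define b ∈ ℝ^M by b(j) = ⟨x_i, x_j⟩ − (1/2)‖x_j‖² (i.e., the Self-Convolution values minus half the squared patch norms, which by Lemma 2 equals −(1/2)‖x_j − x_i‖² + (1/2)‖x_i‖²). Assume b(j) ≥ 0 for all j. Let K ≤ M and let Ω ⊆ {1, …, M} with |Ω| = K be such that |b(j)| ≥ |b(j')| for all j ∈ Ω, j' ∉ Ω (so Ω is the support of the ℓ₀-constrained minimizer of ‖b − a‖² subject to ‖a‖₀ ≤ K). Then Ω solves Euclidean-distance block matching over subsets of size K: for every S ⊆ {1, …, M} with |S| = K, Σ_{j∈Ω} ‖x_j − x_i‖² ≤ Σ_{j∈S} ‖x_j − x_i‖². -/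
/-! Expanding the square gives `‖x_j − x_i‖² = ‖x_i‖² − 2 b(j)`, so (as `b ≥ 0`) the indices with
the largest `|b(j)|` are those with the smallest distances to `x_i`. A set of `K` indices on which
a function takes its `K` smallest values minimizes its sum among all `K`-sets: exchanging the
elements of `Ω \ S` for those of `S \ Ω` can only increase the sum. -/

open RealInnerProductSpace

namespace Finset

theorem sum_le_sum_of_card_eq_of_forall_le {ι M : Type*} [AddCommMonoid M] [LinearOrder M]
    [IsOrderedAddMonoid M] {f : ι → M} {s t : Finset ι} (hst : #s = #t)
    (hle : ∀ j ∈ s, ∀ j' ∉ s, f j ≤ f j') :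
    ∑ j ∈ s, f j ≤ ∑ j ∈ t, f j := by
  classical
  have hcard : #(s \ t) = #(t \ s) := card_sdiff_comm hst
  have hexchange : ∑ j ∈ s \ t, f j ≤ ∑ j ∈ t \ s, f j := by
    rcases (s \ t).eq_empty_or_nonempty with hempty | hne
    · rw [hempty, card_empty, eq_comm, card_eq_zero] at hcard
      rw [hempty, hcard]
    · obtain ⟨j₀, hj₀, hmax⟩ := exists_max_image (s \ t) f hne
      calc ∑ j ∈ s \ t, f j ≤ #(s \ t) • f j₀ := sum_le_card_nsmul _ _ _ hmax
        _ = #(t \ s) • f j₀ := by rw [hcard]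
        _ ≤ ∑ j ∈ t \ s, f j := card_nsmul_le_sum _ _ _ fun j hj =>
            hle j₀ (mem_sdiff.1 hj₀).1 j (mem_sdiff.1 hj).2
  rw [← sum_inter_add_sum_sdiff s t, ← sum_inter_add_sum_sdiff t s, inter_comm]
  exact add_le_add_right hexchange _

end Finset

theorem self_convolution_block_matching_euclidean_general
    (M n : ℕ)
    (x : Fin M → EuclideanSpace ℝ (Fin n)) (i : Fin M)
    (b : Fin M → ℝ)
    (hb : ∀ j, b j = ⟪x i, x j⟫ - (1 / 2) * ‖x j‖ ^ 2)
    (hbnn : ∀ j, 0 ≤ b j)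
    (K : ℕ)
    (Ω : Finset (Fin M)) (hcard : Ω.card = K)
    (htop : ∀ j ∈ Ω, ∀ j' ∉ Ω, |b j'| ≤ |b j|) :
    ∀ S : Finset (Fin M), S.card = K →
      ∑ j ∈ Ω, ‖x j - x i‖ ^ 2 ≤ ∑ j ∈ S, ‖x j - x i‖ ^ 2 := by
  intro S hS
  have hdist : ∀ j, ‖x j - x i‖ ^ 2 = ‖x i‖ ^ 2 - 2 * b j := fun j => by
    rw [norm_sub_sq_real, hb j, real_inner_comm]
    ring
  refine Finset.sum_le_sum_of_card_eq_of_forall_le (hcard.trans hS.symm) fun j hj j' hj' => ?_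
  have hbj := htop j hj j' hj'
  rw [abs_of_nonneg (hbnn j), abs_of_nonneg (hbnn j')] at hbj
  rw [hdist, hdist]
  linarith

/-- Euclidean-distance case of Theorem 1: the support `Ω` of the ℓ₀-constrained
Self-Convolution solution (the top-`K` largest-magnitude entries of
`b j = ⟨x_i, x_j⟩ − ‖x_j‖²/2`, assumed nonnegative) solves Euclidean-distance block
matching: it minimizes `∑_{j∈S} ‖x_j − x_i‖²` over subsets `S` of size `K`. -/
theorem self_convolution_block_matching_euclidean
    (M n : ℕ) (hM : 0 < M) (hn : 0 < n)
    (x : Fin M → EuclideanSpace ℝ (Fin n)) (i : Fin M)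
    (b : Fin M → ℝ)
    (hb : ∀ j, b j = ⟪x i, x j⟫ - (1 / 2) * ‖x j‖ ^ 2)
    (hbnn : ∀ j, 0 ≤ b j)
    (K : ℕ) (hK : K ≤ M)
    (Ω : Finset (Fin M)) (hcard : Ω.card = K)
    (htop : ∀ j ∈ Ω, ∀ j' ∉ Ω, |b j'| ≤ |b j|) :
    ∀ S : Finset (Fin M), S.card = K →
      ∑ j ∈ Ω, ‖x j - x i‖ ^ 2 ≤ ∑ j ∈ S, ‖x j - x i‖ ^ 2 :=
  self_convolution_block_matching_euclidean_general M n x i b hb hbnn K Ω hcard htop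
end

section
/- Let p, q be positive integers and let Z be a real p × q matrix with full singular value decomposition Z = U · S · Vᵀ, where U is a p × p matrix with UᵀU = I, V is a q × q matrix with VᵀV = I, and S is a p × q matrix with S(k,k) = σ_k ≥ 0 for k ≤ min(p,q), σ_1 ≥ σ_2 ≥ … ≥ σ_{min(p,q)}, and all off-diagonal entries zero. Let θ > 0 and let H_θ(S) be the p × q matrix obtained from S by replacing each diagonal entry σ_k with σ_k if σ_k > θ and with 0 otherwise. Then D̂ = U · H_θ(S) · Vᵀ is a global minimizer of the rank-penalized approximation problem: for every real p × q matrix D, ‖Z − D̂‖_F² + θ²·rank(D̂) ≤ ‖Z − D‖_F² + θ²·rank(D). -/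
/-!
Conjugation by the orthogonal factors preserves Frobenius norms and does not increase ranks, so
it suffices to compare `S` with `M = Uᵀ D V`. Keeping an entry `σ > θ` of `S` costs `θ²` in rank,
dropping an entry `σ ≤ θ` costs `σ²` in error, so the thresholded matrix costs at most
`∑ min (θ², σ²)` over the entries of `S`. For a competitor `M` of rank `r`, let `X` have
orthonormal rows spanning `ker M` and let `c_j = ∑_k X_kj²` be the squared length of the projection
of the `j`-th basis vector onto `ker M`; then `0 ≤ c_j ≤ 1` and `∑ (1 - c_j) = r`. Projecting onto
`ker M` gives `‖S - M‖² ≥ ‖S Xᵀ‖² = ∑ σ_j² c_j`, because `S` has at most one nonzero entry in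
every row. As every column of `S` also has at most one nonzero entry, the bound
`min (θ², σ²) ≤ θ² (1 - c) + σ² c` summed over the columns yields `θ² r + ‖S - M‖²`.
-/

open Matrix Function Finset

theorem Fintype.sum_comp_eq_comp_sum_of_support_subsingleton {ι M N : Type*} [Fintype ι]
    [AddCommMonoid M] [AddCommMonoid N] {f : ι → M} (hf : (support f).Subsingleton)
    (g : M → N) (hg : g 0 = 0) : ∑ i, g (f i) = g (∑ i, f i) := by
  rcases hf.eq_empty_or_singleton with h | ⟨a, ha⟩
  · simp [support_eq_empty_iff.mp h, hg]
  · have hfa : ∀ i ≠ a, f i = 0 := fun i hi =>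
      notMem_support.mp fun h => hi (by rw [ha] at h; exact h)
    rw [Fintype.sum_eq_single a (fun i hi => by rw [hfa i hi, hg]), Fintype.sum_eq_single a hfa]

theorem sum_min_sq_le_of_support_subsingleton {ι : Type*} [Fintype ι] (θ : ℝ) {f : ι → ℝ}
    (hf : (support f).Subsingleton) {c : ℝ} (hc₀ : 0 ≤ c) (hc₁ : c ≤ 1) :
    ∑ i, min (θ ^ 2) (f i ^ 2) ≤ θ ^ 2 * (1 - c) + (∑ i, f i ^ 2) * c := by
  rw [Fintype.sum_comp_eq_comp_sum_of_support_subsingleton hf (fun x => min (θ ^ 2) (x ^ 2))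
      (by simp [sq_nonneg]),
    Fintype.sum_comp_eq_comp_sum_of_support_subsingleton hf (· ^ 2) (by simp)]
  -- a minimum is at most any convex combination
  nlinarith [min_le_left (θ ^ 2) ((∑ i, f i) ^ 2), min_le_right (θ ^ 2) ((∑ i, f i) ^ 2)]

namespace Matrix

theorem exists_orthonormal_rows_mul_transpose_eq_zero {m n : Type*} [Fintype n]
    (M : Matrix m n ℝ) :
    ∃ (k : ℕ) (X : Matrix (Fin k) n ℝ), M.rank + k = Fintype.card n ∧ X * Xᵀ = 1 ∧ M * Xᵀ = 0 := by
  let g : EuclideanSpace ℝ n →ₗ[ℝ] m → ℝ :=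
    M.mulVecLin ∘ₗ (WithLp.linearEquiv 2 ℝ (n → ℝ)).toLinearMap
  let b := stdOrthonormalBasis ℝ (LinearMap.ker g)
  refine ⟨_, of fun i j => (b i : EuclideanSpace ℝ n) j, ?_, ?_, ?_⟩
  · have := LinearMap.finrank_range_add_finrank_ker g
    rwa [LinearMap.range_comp, LinearEquiv.range, Submodule.map_top, finrank_euclideanSpace]
      at this
  · ext i i'
    have := orthonormal_iff_ite.mp b.orthonormal i i'
    rw [Submodule.coe_inner] at this
    simp only [PiLp.inner_apply, RCLike.inner_apply, conj_trivial] at this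
    simp only [mul_apply, transpose_apply, of_apply, one_apply]
    rw [← this]
    exact Finset.sum_congr rfl fun _ _ => mul_comm _ _
  · ext i i'
    have : M *ᵥ (b i' : EuclideanSpace ℝ n) = 0 := LinearMap.mem_ker.mp (b i').2
    simpa [mul_apply, mulVec, dotProduct] using congrFun this i

variable {m n s : Type*} [Fintype m] [Fintype n] [Fintype s]

theorem sum_sq_eq_trace_mul_transpose (A : Matrix m n ℝ) :
    ∑ i, ∑ j, A i j ^ 2 = (A * Aᵀ).trace := by
  simp [trace, mul_apply, sq]

theorem sum_sq_mul_transpose_le [DecidableEq n] [DecidableEq s] (A : Matrix m n ℝ)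
    {X : Matrix s n ℝ} (hX : X * Xᵀ = 1) :
    ∑ i, ∑ k, (A * Xᵀ) i k ^ 2 ≤ ∑ i, ∑ j, A i j ^ 2 := by
  set P : Matrix n n ℝ := 1 - Xᵀ * X
  have hP : P * Pᵀ = P := by
    simp only [P, transpose_sub, transpose_mul, transpose_transpose, transpose_one, sub_mul,
      mul_sub, one_mul, mul_one]
    rw [Matrix.mul_assoc, ← Matrix.mul_assoc X, hX, Matrix.one_mul]
    abel
  have hsplit : A * Aᵀ = (A * Xᵀ) * (A * Xᵀ)ᵀ + (A * P) * (A * P)ᵀ := by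
    rw [transpose_mul A P, Matrix.mul_assoc A P, ← Matrix.mul_assoc P, hP]
    simp only [P, transpose_mul, transpose_transpose, Matrix.sub_mul, Matrix.mul_sub,
      Matrix.one_mul, Matrix.mul_assoc]
    abel
  rw [sum_sq_eq_trace_mul_transpose, sum_sq_eq_trace_mul_transpose, hsplit, trace_add,
    le_add_iff_nonneg_right, ← sum_sq_eq_trace_mul_transpose]
  positivity

theorem sum_sq_apply_le_one [DecidableEq s] {X : Matrix s n ℝ} (hX : X * Xᵀ = 1) (j : n) :
    ∑ k, X k j ^ 2 ≤ 1 := by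
  classical
  simpa [replicateRow, mul_apply, Pi.single_apply] using
    sum_sq_mul_transpose_le (replicateRow Unit (Pi.single j (1 : ℝ))) hX

theorem sum_sq_mul_mul_transpose_of_orthogonal [DecidableEq m] [DecidableEq n]
    {U : Matrix m m ℝ} {V : Matrix n n ℝ} (hU : Uᵀ * U = 1) (hV : Vᵀ * V = 1)
    (A : Matrix m n ℝ) : ∑ i, ∑ j, (U * A * Vᵀ) i j ^ 2 = ∑ i, ∑ j, A i j ^ 2 := by
  rw [sum_sq_eq_trace_mul_transpose, sum_sq_eq_trace_mul_transpose]
  have hV' : U * A * Vᵀ * (U * A * Vᵀ)ᵀ = U * (A * Aᵀ) * Uᵀ := by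
    simp only [transpose_mul, transpose_transpose, Matrix.mul_assoc]
    rw [← Matrix.mul_assoc Vᵀ V, hV, Matrix.one_mul]
  rw [hV', trace_mul_comm, ← Matrix.mul_assoc, hU, Matrix.one_mul]

theorem rank_le_card_support {R : Type*} [CommSemiring R] [StrongRankCondition R] [DecidableEq R]
    (A : Matrix m n R) : A.rank ≤ #{p : m × n | A p.1 p.2 ≠ 0} := by
  classical
  refine (A.rank_le_card_of_support_subset
    (({p : m × n | A p.1 p.2 ≠ 0} : Finset _).image Prod.fst) fun i hi => ?_).trans card_image_le
  obtain ⟨j, hj⟩ := Function.ne_iff.mp hi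
  exact Finset.mem_image.mpr ⟨(i, j), by simpa using hj, rfl⟩

theorem sum_sq_mul_transpose_of_support_subsingleton {S : Matrix m n ℝ}
    (hS : ∀ i, (support (S i)).Subsingleton) (X : Matrix s n ℝ) :
    ∑ i, ∑ k, (S * Xᵀ) i k ^ 2 = ∑ i, ∑ j, S i j ^ 2 * ∑ k, X k j ^ 2 := by
  refine Finset.sum_congr rfl fun i _ => ?_
  have hentry : ∀ k, (S * Xᵀ) i k ^ 2 = ∑ j, S i j ^ 2 * X k j ^ 2 := fun k => by
    rw [mul_apply, ← Fintype.sum_comp_eq_comp_sum_of_support_subsingleton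
      ((hS i).anti (support_mul_subset_left _ _)) (· ^ 2) (by simp)]
    simp only [transpose_apply, mul_pow]
  simp only [hentry, Finset.mul_sum]
  exact Finset.sum_comm

theorem sum_sq_sub_add_sq_mul_rank_le_sum_min {θ : ℝ} (hθ : 0 ≤ θ) {S T : Matrix m n ℝ}
    (hS : ∀ i j, 0 ≤ S i j) (hT : ∀ i j, T i j = if θ < S i j then S i j else 0) :
    ∑ i, ∑ j, (S - T) i j ^ 2 + θ ^ 2 * T.rank ≤ ∑ i, ∑ j, min (θ ^ 2) (S i j ^ 2) := by
  have hsupp : #{p : m × n | T p.1 p.2 ≠ 0} = #{p : m × n | θ < S p.1 p.2} := by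
    congr 1
    ext p
    simp only [mem_filter, mem_univ, true_and, hT]
    split_ifs with h
    · simp [h, (hθ.trans_lt h).ne']
    · simp [h]
  have hcount : θ ^ 2 * (#{p : m × n | θ < S p.1 p.2} : ℝ)
      = ∑ i, ∑ j, if θ < S i j then θ ^ 2 else 0 := by
    rw [Finset.card_filter, Nat.cast_sum, Finset.mul_sum, ← Finset.univ_product_univ,
      Finset.sum_product]
    simp
  calc ∑ i, ∑ j, (S - T) i j ^ 2 + θ ^ 2 * T.rank
      ≤ ∑ i, ∑ j, (S - T) i j ^ 2 + θ ^ 2 * #{p : m × n | T p.1 p.2 ≠ 0} := by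
        gcongr
        exact_mod_cast rank_le_card_support T
    _ = ∑ i, ∑ j, ((S - T) i j ^ 2 + if θ < S i j then θ ^ 2 else 0) := by
        rw [hsupp, hcount, ← sum_add_distrib]
        simp only [sum_add_distrib]
    _ ≤ ∑ i, ∑ j, min (θ ^ 2) (S i j ^ 2) := by
        gcongr with i _ j _
        rw [sub_apply, hT]
        split_ifs with h
        · have : θ ^ 2 ≤ S i j ^ 2 := pow_le_pow_left₀ hθ h.le 2
          simp [this]
        · have : S i j ^ 2 ≤ θ ^ 2 := pow_le_pow_left₀ (hS i j) (not_lt.mp h) 2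
          simp [this]

theorem sum_min_sq_le_sum_sq_sub_add_sq_mul_rank (θ : ℝ) {S : Matrix m n ℝ}
    (hrow : ∀ i, (support (S i)).Subsingleton) (hcol : ∀ j, (support fun i => S i j).Subsingleton)
    (M : Matrix m n ℝ) :
    ∑ i, ∑ j, min (θ ^ 2) (S i j ^ 2) ≤ ∑ i, ∑ j, (S - M) i j ^ 2 + θ ^ 2 * M.rank := by
  classical
  obtain ⟨k, X, hrank, hX, hMX⟩ := exists_orthonormal_rows_mul_transpose_eq_zero M
  set c : n → ℝ := fun j => ∑ l, X l j ^ 2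
  have hc_sum : ∑ j, (1 - c j) = M.rank := by
    have hunit : ∀ l, ∑ j, X l j ^ 2 = 1 := fun l => by
      simpa [mul_apply, sq] using congrFun (congrFun hX l) l
    rw [sum_sub_distrib, Finset.sum_comm, Finset.sum_congr rfl fun l _ => hunit l]
    simp only [sum_const, card_univ, Fintype.card_fin, nsmul_eq_mul, mul_one]
    rw [← hrank]
    push_cast
    ring
  calc ∑ i, ∑ j, min (θ ^ 2) (S i j ^ 2) = ∑ j, ∑ i, min (θ ^ 2) (S i j ^ 2) := Finset.sum_comm
    _ ≤ ∑ j, (θ ^ 2 * (1 - c j) + (∑ i, S i j ^ 2) * c j) := by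
        gcongr with j
        exact sum_min_sq_le_of_support_subsingleton θ (hcol j) (by positivity)
          (sum_sq_apply_le_one hX j)
    _ = θ ^ 2 * M.rank + ∑ i, ∑ l, (S * Xᵀ) i l ^ 2 := by
        rw [sum_sq_mul_transpose_of_support_subsingleton hrow, sum_add_distrib, ← mul_sum, hc_sum,
          Finset.sum_comm]
        simp only [c, sum_mul]
    _ = θ ^ 2 * M.rank + ∑ i, ∑ l, ((S - M) * Xᵀ) i l ^ 2 := by rw [Matrix.sub_mul, hMX, sub_zero]
    _ ≤ ∑ i, ∑ j, (S - M) i j ^ 2 + θ ^ 2 * M.rank := by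
        rw [add_comm]
        exact add_le_add_left (sum_sq_mul_transpose_le (S - M) hX) _

end Matrix

theorem svd_hard_thresholding_rank_penalized_general
    (p q : ℕ) (θ : ℝ) (hθ : 0 < θ)
    (Z : Matrix (Fin p) (Fin q) ℝ)
    (U : Matrix (Fin p) (Fin p) ℝ)
    (S : Matrix (Fin p) (Fin q) ℝ)
    (V : Matrix (Fin q) (Fin q) ℝ)
    (hU : Uᵀ * U = 1) (hV : Vᵀ * V = 1)
    (hZ : Z = U * S * Vᵀ)
    (hSoff : ∀ (k : Fin p) (l : Fin q), (k : ℕ) ≠ (l : ℕ) → S k l = 0)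
    (hSnn : ∀ (k : Fin p) (l : Fin q), (k : ℕ) = (l : ℕ) → 0 ≤ S k l)
    (T : Matrix (Fin p) (Fin q) ℝ)
    (hT : ∀ (k : Fin p) (l : Fin q),
      T k l = if (k : ℕ) = (l : ℕ) ∧ θ < S k l then S k l else 0) :
    ∀ D : Matrix (Fin p) (Fin q) ℝ,
      (∑ i, ∑ j, ((Z - U * T * Vᵀ) i j) ^ 2) + θ ^ 2 * ((U * T * Vᵀ).rank : ℝ)
        ≤ (∑ i, ∑ j, ((Z - D) i j) ^ 2) + θ ^ 2 * (D.rank : ℝ) := by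
  intro D
  set M := Uᵀ * D * V
  have hZD : Z - D = U * (S - M) * Vᵀ := by
    simp only [hZ, M, Matrix.mul_sub, Matrix.sub_mul, ← Matrix.mul_assoc,
      mul_eq_one_comm.mp hU, Matrix.one_mul]
    rw [Matrix.mul_assoc D, mul_eq_one_comm.mp hV, Matrix.mul_one]
  have hZT : Z - U * T * Vᵀ = U * (S - T) * Vᵀ := by
    rw [hZ, Matrix.mul_sub, Matrix.sub_mul]
  have hdiag : ∀ k l, S k l ≠ 0 → (k : ℕ) = l := fun k l => not_imp_comm.mp (hSoff k l)
  have hS : ∀ k l, 0 ≤ S k l := fun k l =>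
    (eq_or_ne (k : ℕ) l).elim (hSnn k l) fun h => (hSoff k l h).ge
  have hT' : ∀ k l, T k l = if θ < S k l then S k l else 0 := fun k l => by
    by_cases h : (k : ℕ) = l
    · simp [hT, h]
    · simp [hT, h, hSoff k l h, hθ.not_gt]
  have hrow : ∀ k, (support (S k)).Subsingleton := fun k l hl l' hl' =>
    Fin.ext ((hdiag k l hl).symm.trans (hdiag k l' hl'))
  have hcol : ∀ l, (support fun k => S k l).Subsingleton := fun l k hk k' hk' =>
    Fin.ext ((hdiag k l hk).trans (hdiag k' l hk').symm)
  calc ∑ i, ∑ j, (Z - U * T * Vᵀ) i j ^ 2 + θ ^ 2 * ((U * T * Vᵀ).rank : ℝ)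
      ≤ ∑ i, ∑ j, (S - T) i j ^ 2 + θ ^ 2 * (T.rank : ℝ) := by
        rw [hZT, sum_sq_mul_mul_transpose_of_orthogonal hU hV]
        gcongr
        exact (rank_mul_le_left _ _).trans (rank_mul_le_right _ _)
    _ ≤ ∑ i, ∑ j, min (θ ^ 2) (S i j ^ 2) := sum_sq_sub_add_sq_mul_rank_le_sum_min hθ.le hS hT'
    _ ≤ ∑ i, ∑ j, (S - M) i j ^ 2 + θ ^ 2 * (M.rank : ℝ) :=
        sum_min_sq_le_sum_sq_sub_add_sq_mul_rank θ hrow hcol M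
    _ ≤ ∑ i, ∑ j, (Z - D) i j ^ 2 + θ ^ 2 * (D.rank : ℝ) := by
        rw [hZD, sum_sq_mul_mul_transpose_of_orthogonal hU hV]
        gcongr
        exact (rank_mul_le_left _ _).trans (rank_mul_le_right _ _)

/-- Exact solution of the low-rank approximation step (equation (8)):
given a full SVD `Z = U S Vᵀ`, hard thresholding of the singular values at level
`θ` yields a global minimizer of `‖Z − D‖_F² + θ²·rank(D)`. -/
theorem svd_hard_thresholding_rank_penalized
    (p q : ℕ) (hp : 0 < p) (hq : 0 < q) (θ : ℝ) (hθ : 0 < θ)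
    (Z : Matrix (Fin p) (Fin q) ℝ)
    (U : Matrix (Fin p) (Fin p) ℝ)
    (S : Matrix (Fin p) (Fin q) ℝ)
    (V : Matrix (Fin q) (Fin q) ℝ)
    (hU : Uᵀ * U = 1) (hV : Vᵀ * V = 1)
    (hZ : Z = U * S * Vᵀ)
    (hSoff : ∀ (k : Fin p) (l : Fin q), (k : ℕ) ≠ (l : ℕ) → S k l = 0)
    (hSnn : ∀ (k : Fin p) (l : Fin q), (k : ℕ) = (l : ℕ) → 0 ≤ S k l)
    (hSdec : ∀ (k k' : Fin p) (l l' : Fin q),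
      (k : ℕ) = (l : ℕ) → (k' : ℕ) = (l' : ℕ) → (k : ℕ) ≤ (k' : ℕ) →
        S k' l' ≤ S k l)
    (T : Matrix (Fin p) (Fin q) ℝ)
    (hT : ∀ (k : Fin p) (l : Fin q),
      T k l = if (k : ℕ) = (l : ℕ) ∧ θ < S k l then S k l else 0) :
    ∀ D : Matrix (Fin p) (Fin q) ℝ,
      (∑ i, ∑ j, ((Z - U * T * Vᵀ) i j) ^ 2) + θ ^ 2 * ((U * T * Vᵀ).rank : ℝ)
        ≤ (∑ i, ∑ j, ((Z - D) i j) ^ 2) + θ ^ 2 * (D.rank : ℝ) :=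
  svd_hard_thresholding_rank_penalized_general p q θ hθ Z U S V hU hV hZ hSoff hSnn T hT
end
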